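/- Let G be a connected bipartite graph of order at least 3 whose vertex set is partitioned into stable sets U and W with 1 ≤ |U| = r ≤ |W| = s. If 1 ≤ r ≤ 2, then λ(Ḡ) ≤ λ(G). -/

import Mathlib

open SimpleGraph

/-- `S` is a dominating set of `G`: every vertex outside `S` has a neighbor in `S`. -/
def isDomSet {α : Type*} (G : SimpleGraph α) (S : Set α) : Prop :=
  ∀ v ∉ S, ∃ u ∈ S, G.Adj v u

/-- `S` is a locating-dominating set (LD-set) of `G`. -/
def isLDSet {α : Type*} (G : SimpleGraph α) (S : Set α) : Prop :=
  isDomSet G S ∧ ∀ u ∉ S, ∀ v ∉ S, u ≠ v →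
    G.neighborSet u ∩ S ≠ G.neighborSet v ∩ S

/-- The location-domination number `λ(G)`. -/
noncomputable def ldNum {α : Type*} (G : SimpleGraph α) : ℕ :=
  sInf {n | ∃ S : Set α, isLDSet G S ∧ S.ncard = n}

/-- The global location-domination number `λ_g(G)`. -/
noncomputable def gldNum {α : Type*} (G : SimpleGraph α) : ℕ :=
  sInf {n | ∃ S : Set α, isLDSet G S ∧ isLDSet Gᶜ S ∧ S.ncard = n}

/-- `G` is bipartite with stable sets `U` and `W`. -/
def bipartiteWith {α : Type*} (G : SimpleGraph α) (U W : Set α) : Prop :=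
  U ∪ W = Set.univ ∧ Disjoint U W ∧
    ∀ ⦃u v : α⦄, G.Adj u v → (u ∈ U ∧ v ∈ W) ∨ (u ∈ W ∧ v ∈ U)

/-!
Take a minimum LD-set `S` of `G`. Complementation preserves distinctness of traces on `S`, so
`S` is an LD-set of `Gᶜ` unless some vertex `v ∉ S` is adjacent to all of `S`, i.e. is not
dominated in `Gᶜ`. By bipartiteness and domination, `S` is then the whole side opposite to `v`.
If `v ∈ U`, then `S = W` and `U \ {v}` has at most one vertex; if `v ∈ W`, then `S = U`, and
`|S| ≥ 2` (true of any LD-set once `n ≥ 3`) forces `U = {a, b}`, where every other vertex of `W`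
is adjacent to exactly one of `a`, `b`. In both cases exchanging a vertex of `S` for `v` yields
an LD-set of `Gᶜ` of the same size.
-/

section LocatingDominating

variable {α : Type*} {G : SimpleGraph α} {S : Set α} {a b v : α}

lemma ldNum_le_ncard (hS : isLDSet G S) : ldNum G ≤ S.ncard :=
  Nat.sInf_le ⟨S, hS, rfl⟩

lemma exists_isLDSet_ncard_eq_ldNum (G : SimpleGraph α) :
    ∃ S : Set α, isLDSet G S ∧ S.ncard = ldNum G :=
  Nat.sInf_mem (s := {n | ∃ S : Set α, isLDSet G S ∧ S.ncard = n})
    ⟨_, Set.univ, ⟨fun _ hv => (hv trivial).elim, fun _ hu => (hu trivial).elim⟩, rfl⟩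

lemma compl_neighborSet_inter_eq_diff {u : α} (hu : u ∉ S) :
    Gᶜ.neighborSet u ∩ S = S \ G.neighborSet u := by
  ext x
  simp only [Set.mem_inter_iff, mem_neighborSet, compl_adj, Set.mem_sdiff]
  exact ⟨fun ⟨⟨_, hna⟩, hx⟩ => ⟨hx, hna⟩, fun ⟨hx, hna⟩ => ⟨⟨fun h => hu (h ▸ hx), hna⟩, hx⟩⟩

lemma compl_neighborSet_inter_eq_iff {u w : α} (hu : u ∉ S) (hw : w ∉ S) :
    Gᶜ.neighborSet u ∩ S = Gᶜ.neighborSet w ∩ S ↔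
      G.neighborSet u ∩ S = G.neighborSet w ∩ S := by
  rw [compl_neighborSet_inter_eq_diff hu, compl_neighborSet_inter_eq_diff hw,
    Set.inter_comm _ S, Set.inter_comm _ S]
  refine ⟨fun h => ?_, fun h => by rw [← Set.sdiff_self_inter, h, Set.sdiff_self_inter]⟩
  rw [← Set.sdiff_sdiff_right_self S (G.neighborSet u), h, Set.sdiff_sdiff_right_self]

lemma isLDSet.compl_of_forall_exists_not_adj (hS : isLDSet G S)
    (h : ∀ v ∉ S, ∃ u ∈ S, ¬ G.Adj v u) : isLDSet Gᶜ S := by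
  refine ⟨fun x hx => ?_, fun u hu w hw huw => ?_⟩
  · obtain ⟨u, huS, hna⟩ := h x hx
    exact ⟨u, huS, (compl_adj G x u).mpr ⟨fun he => hx (he ▸ huS), hna⟩⟩
  · rw [Ne, compl_neighborSet_inter_eq_iff hu hw]
    exact hS.2 u hu w hw huw

lemma isLDSet.compl_subsingleton (hS : isLDSet G S) (hS1 : S.Subsingleton) :
    Sᶜ.Subsingleton := by
  have htrace : ∀ x ∉ S, G.neighborSet x ∩ S = S := fun x hx => by
    obtain ⟨u, huS, hxu⟩ := hS.1 x hx
    exact Set.inter_eq_right.mpr fun y hy => (hS1 huS hy) ▸ hxu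
  intro a ha b hb
  by_contra hab
  exact hS.2 a ha b hb hab (by rw [htrace a ha, htrace b hb])

lemma isLDSet.two_le_ncard [Finite α] (hS : isLDSet G S) (hcard : 3 ≤ Nat.card α) :
    2 ≤ S.ncard := by
  by_contra! h
  have hc := Set.ncard_le_one_iff_subsingleton.mpr
    (hS.compl_subsingleton (Set.ncard_le_one_iff_subsingleton.mp (by omega)))
  have := Set.ncard_add_ncard_compl S
  omega

lemma isLDSet.adj_iff_not_adj_of_eq_pair (hS : isLDSet G S) (hab : S = {a, b}) (hvS : v ∉ S)
    (hSv : ∀ u ∈ S, G.Adj v u) {y : α} (hyS : y ∉ S) (hyv : y ≠ v) :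
    G.Adj y a ↔ ¬ G.Adj y b := by
  subst hab
  refine ⟨fun hya hyb => hS.2 y hyS v hvS hyv ?_, fun hyb => ?_⟩
  · rw [(Set.inter_eq_right (s := G.neighborSet v)).mpr hSv, Set.inter_eq_right.mpr]
    rintro u (rfl | rfl) <;> assumption
  · obtain ⟨u, rfl | rfl, hyu⟩ := hS.1 y hyS
    exacts [hyu, absurd hyu hyb]

lemma isLDSet.injOn_inter_singleton_of_eq_pair (hS : isLDSet G S) (hab : S = {a, b})
    (hvS : v ∉ S) (hSv : ∀ u ∈ S, G.Adj v u) :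
    Set.InjOn (fun y => G.neighborSet y ∩ {a}) (Sᶜ \ {v}) := by
  intro y hy y' hy' htr
  have hya : G.Adj y a ↔ G.Adj y' a := by
    simpa using congrArg (a ∈ ·) htr
  have hyb : G.Adj y b ↔ G.Adj y' b := by
    rw [← not_iff_not, ← hS.adj_iff_not_adj_of_eq_pair hab hvS hSv hy.1 hy.2,
      ← hS.adj_iff_not_adj_of_eq_pair hab hvS hSv hy'.1 hy'.2, hya]
  by_contra hne
  refine hS.2 y hy.1 y' hy'.1 hne (Set.ext fun z => and_congr_left fun hz => ?_)
  rw [hab] at hz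
  rcases hz with rfl | rfl
  exacts [hya, hyb]

end LocatingDominating

namespace bipartiteWith

variable {α : Type*} {G : SimpleGraph α} {U W : Set α}

lemma symm (h : bipartiteWith G U W) : bipartiteWith G W U :=
  ⟨Set.union_comm U W ▸ h.1, h.2.1.symm, fun _ _ hadj => (h.2.2 hadj).symm⟩

lemma mem_or_mem (h : bipartiteWith G U W) (x : α) : x ∈ U ∨ x ∈ W :=
  (h.1.symm ▸ Set.mem_univ x : x ∈ U ∪ W)

lemma mem_right_of_adj (h : bipartiteWith G U W) {u w : α} (hu : u ∈ U) (hadj : G.Adj u w) :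
    w ∈ W :=
  ((h.2.2 hadj).resolve_right fun h' => Set.disjoint_left.mp h.2.1 hu h'.1).2

lemma not_adj_of_mem_left (h : bipartiteWith G U W) {u u' : α} (hu : u ∈ U) (hu' : u' ∈ U) :
    ¬ G.Adj u u' :=
  fun hadj => Set.disjoint_left.mp h.2.1 hu' (h.mem_right_of_adj hu hadj)

lemma right_subset_compl (h : bipartiteWith G U W) : W ⊆ Uᶜ :=
  fun _ hw hu => Set.disjoint_left.mp h.2.1 hu hw

lemma eq_right_of_forall_adj (h : bipartiteWith G U W) {S : Set α} {v : α} (hS : isDomSet G S)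
    (hv : v ∈ U) (hSv : ∀ u ∈ S, G.Adj v u) : S = W := by
  have hSW : S ⊆ W := fun u hu => h.mem_right_of_adj hv (hSv u hu)
  refine hSW.antisymm fun w hw => by_contra fun hwS => ?_
  obtain ⟨u, huS, hwu⟩ := hS w hwS
  exact Set.disjoint_left.mp h.2.1 (h.symm.mem_right_of_adj hw hwu) (hSW huS)

/-- In `Gᶜ` both sides are cliques and `v` is adjacent to all of `U \ {v}` but not to `x`, so `v`
dominates `U \ {v}` and separates it from `x`; on `W \ {x}` the traces in `Gᶜ` are the complements
of those in `G`. -/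
lemma isLDSet_compl_exchange (h : bipartiteWith G U W) {v x x' : α} (hv : v ∈ U)
    (hWv : ∀ w ∈ W, G.Adj v w) (hx : x ∈ W) (hx' : x' ∈ W) (hxx' : x ≠ x')
    (hinj : Set.InjOn (fun y => G.neighborSet y ∩ (W \ {x})) (U \ {v})) :
    isLDSet Gᶜ (insert v (W \ {x})) := by
  have hvS : v ∈ insert v (W \ {x}) := Set.mem_insert v _
  have hWS : W \ {x} ⊆ insert v (W \ {x}) := Set.subset_insert v _
  have hout : ∀ y ∉ insert v (W \ {x}), y ∉ U → y = x := fun y hy hyU =>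
    by_contra fun hyx => hy (hWS ⟨(h.mem_or_mem y).resolve_left hyU, hyx⟩)
  have hv_trace : ∀ y ∉ insert v (W \ {x}),
      (v ∈ Gᶜ.neighborSet y ∩ insert v (W \ {x}) ↔ y ∈ U) := by
    intro y hy
    refine ⟨fun hvy => by_contra fun hyU => ?_, fun hyU =>
      ⟨(compl_adj G y v).mpr ⟨fun e => hy (e ▸ hvS), h.not_adj_of_mem_left hyU hv⟩, hvS⟩⟩
    obtain rfl := hout y hy hyU
    exact ((compl_adj G y v).mp hvy.1).2 (hWv y hx).symm
  refine ⟨fun y hy => ?_, fun y hy y' hy' hyy' htr => ?_⟩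
  · by_cases hyU : y ∈ U
    · exact ⟨v, hvS, ((hv_trace y hy).mpr hyU).1⟩
    · obtain rfl := hout y hy hyU
      exact ⟨x', hWS ⟨hx', hxx'.symm⟩,
        (compl_adj G _ _).mpr ⟨hxx', h.symm.not_adj_of_mem_left hx hx'⟩⟩
  · have hyU_iff : y ∈ U ↔ y' ∈ U := by rw [← hv_trace y hy, ← hv_trace y' hy', htr]
    by_cases hyU : y ∈ U
    · refine hyy' (hinj ⟨hyU, fun e => hy (e ▸ hvS)⟩ ⟨hyU_iff.mp hyU, fun e => hy' (e ▸ hvS)⟩ ?_)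
      rw [compl_neighborSet_inter_eq_iff hy hy'] at htr
      show G.neighborSet y ∩ (W \ {x}) = G.neighborSet y' ∩ (W \ {x})
      rw [← Set.inter_eq_right.mpr hWS, ← Set.inter_assoc, ← Set.inter_assoc, htr]
    · exact hyy' ((hout y hy hyU).trans (hout y' hy' (hyU_iff.not.mp hyU)).symm)

end bipartiteWith

theorem stmt13_general {V : Type*} [Fintype V] (G : SimpleGraph V) (U W : Set V) (r : ℕ)
    (hbip : bipartiteWith G U W)
    (hU : U.ncard = r)
    (hn : 3 ≤ Fintype.card V)
    (hr2 : r ≤ 2) :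
    ldNum Gᶜ ≤ ldNum G := by
  obtain ⟨S, hS, hS_card⟩ := exists_isLDSet_ncard_eq_ldNum G
  rw [← hS_card]
  by_cases hdom : ∀ v ∉ S, ∃ u ∈ S, ¬ G.Adj v u
  · exact ldNum_le_ncard (hS.compl_of_forall_exists_not_adj hdom)
  push Not at hdom
  obtain ⟨v, hvS, hSv⟩ := hdom
  have hS2 : 2 ≤ S.ncard := hS.two_le_ncard (Nat.card_eq_fintype_card (α := V) ▸ hn)
  rcases hbip.mem_or_mem v with hvU | hvW
  · obtain rfl := hbip.eq_right_of_forall_adj hS.1 hvU hSv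
    obtain ⟨x, hx, x', hx', hxx'⟩ := (Set.one_lt_ncard).mp hS2
    have hUv : (U \ {v}).Subsingleton := by
      rw [← Set.ncard_le_one_iff_subsingleton, Set.ncard_sdiff_singleton_of_mem hvU]
      omega
    rw [← Set.ncard_exchange hvS hx]
    exact ldNum_le_ncard (hbip.isLDSet_compl_exchange hvU hSv hx hx' hxx' (hUv.injOn _))
  · obtain rfl := hbip.symm.eq_right_of_forall_adj hS.1 hvW hSv
    obtain ⟨a, b, hab, hU_eq⟩ := Set.ncard_eq_two.mp (by omega : S.ncard = 2)
    have hb : b ∈ S := hU_eq ▸ Set.mem_insert_of_mem a rfl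
    have hinj := (hS.injOn_inter_singleton_of_eq_pair hU_eq hvS hSv).mono
      (Set.sdiff_subset_sdiff_left hbip.right_subset_compl)
    rw [← Set.ncard_exchange hvS hb]
    refine ldNum_le_ncard (hbip.symm.isLDSet_compl_exchange hvW hSv hb
      (hU_eq ▸ Set.mem_insert a {b}) hab.symm ?_)
    rwa [hU_eq, Set.pair_sdiff_right hab]

theorem stmt13 {V : Type*} [Fintype V] (G : SimpleGraph V) (U W : Set V) (r s : ℕ)
    (hconn : G.Connected) (hbip : bipartiteWith G U W)
    (hU : U.ncard = r) (hW : W.ncard = s)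
    (hrs : r ≤ s) (hn : 3 ≤ Fintype.card V)
    (hr1 : 1 ≤ r) (hr2 : r ≤ 2) :
    ldNum Gᶜ ≤ ldNum G :=
  stmt13_general G U W r hbip hU hn hr2
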